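/- A function u ∈ L¹(I,μ) satisfies ∑_{k=1}^{N!} u(x_k) ≥ (N-1)!·S(x_1,…,x_{N!}) for all (x_1,…,x_{N!}) ∈ I^{N!} if and only if for every n ∈ {N',…,N} and every (y_1,…,y_n) ∈ I^n one has ∑_{k=1}^n u(y_k) ≥ s_n(y_1,…,y_n); that is, the dual set Û defined via S equals the intersection over n of the dual sets U_n defined via the s_n. -/

import Mathlib

open MeasureTheory

/-- The multiset of coordinates of a point of `I^m`. -/
def coordMultiset {I : Type*} {m : ℕ} (x : Fin m → I) : Multiset I :=
  Multiset.map x Finset.univ.val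

/-- `x ∈ I^{N!}` is an `N!/n`-fold replication of `y ∈ I^n` if the multiset of
coordinates of `x` equals `N!/n` copies of the multiset of coordinates of `y`. -/
def IsReplication {I : Type*} (N n : ℕ) (x : Fin (Nat.factorial N) → I)
    (y : Fin n → I) : Prop :=
  coordMultiset x = (Nat.factorial N / n) • coordMultiset y

/-- `Ŝ_n(x) = s_n(y)` if `x` is an `N!/n`-fold replication of some `y ∈ I^n`
(well-defined when `s n` is symmetric), and `0` otherwise. -/
noncomputable def Shat {I : Type*} (s : ∀ n : ℕ, (Fin n → I) → ℝ) (N n : ℕ)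
    (x : Fin (Nat.factorial N) → I) : ℝ :=
  letI := Classical.propDecidable (∃ y : Fin n → I, IsReplication N n x y)
  if h : ∃ y : Fin n → I, IsReplication N n x y then s n h.choose else 0

/-- `S = max_{N' ≤ n ≤ N} (N/n)·Ŝ_n` on `I^{N!}`. -/
noncomputable def bigS {I : Type*} (s : ∀ n : ℕ, (Fin n → I) → ℝ) (N' N : ℕ)
    (hNN : N' ≤ N) (x : Fin (Nat.factorial N) → I) : ℝ :=
  (Finset.Icc N' N).sup' (Finset.nonempty_Icc.mpr hNN)
    (fun n => ((N : ℝ) / (n : ℝ)) * Shat s N n x)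

/-!
For `n ≤ N` the multiplicity `N!/n` is an integer and `(N-1)!·(N/n) = N!/n`, so the constraint
`(N-1)!·S(x) ≤ ∑ u(x_k)` says that `(N!/n)·Ŝ_n(x) ≤ ∑ u(x_k)` for every `n`. If `x` replicates
`y`, then `∑ u(x_k) = (N!/n)·∑ u(y_j)`, and by symmetry of `s_n` the value `Ŝ_n(x)` is `s_n(y)`;
since every `y ∈ I^n` has a replication, this is exactly the constraint `s_n(y) ≤ ∑ u(y_j)`.
At points `x` that replicate nothing `Ŝ_n(x) = 0`, and there the constraint holds because the
constraints at constant tuples, together with `s_{N'} ≥ 0`, force `u ≥ 0`.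
-/

section coordMultiset

variable {I : Type*} {m : ℕ}

lemma coordMultiset_eq_ofFn (x : Fin m → I) : coordMultiset x = ↑(List.ofFn x) :=
  Fin.univ_val_map x

lemma card_coordMultiset (x : Fin m → I) : Multiset.card (coordMultiset x) = m := by
  simp [coordMultiset]

lemma exists_coordMultiset_eq {M : Multiset I} (hM : Multiset.card M = m) :
    ∃ x : Fin m → I, coordMultiset x = M := by
  obtain ⟨l, rfl⟩ : ∃ l : List I, (l : Multiset I) = M := Quot.exists_rep M
  rw [Multiset.coe_card] at hM
  subst hM
  exact ⟨l.get, by rw [coordMultiset_eq_ofFn, List.ofFn_get]⟩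

lemma card_fiber_eq_count [DecidableEq I] (x : Fin m → I) (c : I) :
    Nat.card {i // x i = c} = (coordMultiset x).count c := by
  rw [Nat.card_eq_fintype_card, Fintype.card_subtype, coordMultiset, Multiset.count_map]
  simp only [eq_comm]
  rfl

lemma exists_perm_of_coordMultiset_eq {x y : Fin m → I}
    (h : coordMultiset x = coordMultiset y) : ∃ σ : Equiv.Perm (Fin m), x = y ∘ σ := by
  classical
  have e (c : I) : {i // x i = c} ≃ {i // y i = c} :=
    (Finite.card_eq.mp (by rw [card_fiber_eq_count, card_fiber_eq_count, h])).some
  exact ⟨Equiv.ofFiberEquiv e, funext fun i => (Equiv.ofFiberEquiv_map e i).symm⟩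

lemma sum_comp_eq_sum_map_coordMultiset {M : Type*} [AddCommMonoid M] (u : I → M)
    (x : Fin m → I) :
    ∑ k, u (x k) = ((coordMultiset x).map u).sum := by
  rw [coordMultiset, Multiset.map_map]
  rfl

lemma sum_comp_eq_nsmul_of_coordMultiset_eq {M : Type*} [AddCommMonoid M] {k r : ℕ}
    {x : Fin m → I} {y : Fin k → I} (h : coordMultiset x = r • coordMultiset y) (u : I → M) :
    ∑ i, u (x i) = r • ∑ j, u (y j) := by
  rw [sum_comp_eq_sum_map_coordMultiset, sum_comp_eq_sum_map_coordMultiset, h,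
    Multiset.map_nsmul, Multiset.sum_nsmul]

lemma apply_eq_of_coordMultiset_eq {β : Type*} {f : (Fin m → I) → β}
    (hf : ∀ (σ : Equiv.Perm (Fin m)) x, f (x ∘ σ) = f x) {x y : Fin m → I}
    (h : coordMultiset x = coordMultiset y) : f x = f y := by
  obtain ⟨σ, rfl⟩ := exists_perm_of_coordMultiset_eq h
  exact hf σ y

end coordMultiset

open Nat

section Replication

variable {I : Type*} {N n : ℕ}

lemma factorial_div_pos (hn : 0 < n) (hnN : n ≤ N) : 0 < N ! / n :=
  Nat.div_pos (hnN.trans (Nat.self_le_factorial N)) hn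

lemma factorial_pred_mul_div_eq (hn : 0 < n) (hnN : n ≤ N) :
    ((N - 1)! : ℝ) * (N / n) = ((N ! / n : ℕ) : ℝ) := by
  rw [Nat.cast_div (Nat.dvd_factorial hn hnN) (by positivity),
    ← Nat.mul_factorial_pred (n := N) (by omega)]
  push_cast
  ring

lemma exists_isReplication (hn : 0 < n) (hnN : n ≤ N) (y : Fin n → I) :
    ∃ x, IsReplication N n x y :=
  exists_coordMultiset_eq <| by
    rw [Multiset.card_nsmul, card_coordMultiset, Nat.div_mul_cancel (Nat.dvd_factorial hn hnN)]

lemma IsReplication.sum_comp_eq {x : Fin N ! → I} {y : Fin n → I} (h : IsReplication N n x y)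
    (u : I → ℝ) : ∑ k, u (x k) = (N ! / n : ℕ) * ∑ j, u (y j) := by
  rw [sum_comp_eq_nsmul_of_coordMultiset_eq h, nsmul_eq_mul]

lemma IsReplication.coordMultiset_eq (hn : 0 < n) (hnN : n ≤ N) {x : Fin N ! → I}
    {y₁ y₂ : Fin n → I} (h₁ : IsReplication N n x y₁) (h₂ : IsReplication N n x y₂) :
    coordMultiset y₁ = coordMultiset y₂ :=
  nsmul_right_injective (factorial_div_pos hn hnN).ne' (h₁.symm.trans h₂)

lemma Shat_eq_of_isReplication {s : ∀ n : ℕ, (Fin n → I) → ℝ}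
    (hs : ∀ (σ : Equiv.Perm (Fin n)) x, s n (x ∘ σ) = s n x) (hn : 0 < n) (hnN : n ≤ N)
    {x : Fin N ! → I} {y : Fin n → I} (h : IsReplication N n x y) : Shat s N n x = s n y := by
  have hex : ∃ y, IsReplication N n x y := ⟨y, h⟩
  rw [Shat, dif_pos hex]
  exact apply_eq_of_coordMultiset_eq hs (hex.choose_spec.coordMultiset_eq hn hnN h)

end Replication

lemma factorial_pred_mul_bigS {I : Type*} (s : ∀ n : ℕ, (Fin n → I) → ℝ) {N' N : ℕ}
    (hN' : 0 < N') (hNN : N' ≤ N) (x : Fin N ! → I) :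
    ((N - 1)! : ℝ) * bigS s N' N hNN x =
      (Finset.Icc N' N).sup' (Finset.nonempty_Icc.mpr hNN)
        (fun n => ((N ! / n : ℕ) : ℝ) * Shat s N n x) := by
  rw [bigS, Finset.mul₀_sup' (by positivity)]
  refine Finset.sup'_congr _ rfl fun n hn => ?_
  obtain ⟨hn₁, hn₂⟩ := Finset.mem_Icc.mp hn
  rw [← mul_assoc, factorial_pred_mul_div_eq (by omega) hn₂]

lemma nonneg_of_le_sum_comp {I : Type*} {n : ℕ} (hn : 0 < n) {f : (Fin n → I) → ℝ}
    (hf : ∀ y, 0 ≤ f y) {u : I → ℝ} (hu : ∀ y, f y ≤ ∑ k, u (y k)) (t : I) :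
    0 ≤ u t := by
  have := (hf _).trans (hu fun _ => t)
  rw [Finset.sum_const, Finset.card_univ, Fintype.card_fin, nsmul_eq_mul] at this
  exact nonneg_of_mul_nonneg_right this (by positivity)

theorem dual_sets_eq_general
    {I : Type*}
    (N' N : ℕ) (hN' : 2 ≤ N') (hNN : N' ≤ N)
    (s : ∀ n : ℕ, (Fin n → I) → ℝ)
    (hs_nonneg : ∀ n ∈ Finset.Icc N' N, ∀ x : Fin n → I, 0 ≤ s n x)
    (hs_symm : ∀ n ∈ Finset.Icc N' N, ∀ σ : Equiv.Perm (Fin n), ∀ x : Fin n → I,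
      s n (x ∘ σ) = s n x)
    (u : I → ℝ) :
    (∀ x : Fin (Nat.factorial N) → I,
        (Nat.factorial (N - 1) : ℝ) * bigS s N' N hNN x ≤ ∑ k, u (x k))
      ↔ (∀ n ∈ Finset.Icc N' N, ∀ y : Fin n → I, s n y ≤ ∑ k, u (y k)) := by
  simp only [factorial_pred_mul_bigS s (by omega : 0 < N') hNN, Finset.sup'_le_iff]
  constructor
  · intro H n hn y
    obtain ⟨hn₁, hn₂⟩ := Finset.mem_Icc.mp hn
    obtain ⟨x, hx⟩ := exists_isReplication (by omega) hn₂ y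
    have := H x n hn
    rw [Shat_eq_of_isReplication (hs_symm n hn) (by omega) hn₂ hx, hx.sum_comp_eq] at this
    exact le_of_mul_le_mul_left this (mod_cast factorial_div_pos (by omega) hn₂)
  · intro H x n hn
    by_cases hex : ∃ y, IsReplication N n x y
    · rw [Shat, dif_pos hex, hex.choose_spec.sum_comp_eq]
      exact mul_le_mul_of_nonneg_left (H n hn _) (Nat.cast_nonneg _)
    · have hN'N : N' ∈ Finset.Icc N' N := Finset.mem_Icc.mpr ⟨le_rfl, hNN⟩
      rw [Shat, dif_neg hex, mul_zero]
      exact Finset.sum_nonneg fun k _ =>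
        nonneg_of_le_sum_comp (by omega) (hs_nonneg N' hN'N) (H N' hN'N) (x k)

/-- **Lemma 6 (`Û = U = ⋂ₙ Uₙ`).**  A function `u ∈ L¹(μ)` satisfies
`∑_{k=1}^{N!} u(x_k) ≥ (N-1)!·S(x)` for all `x ∈ I^{N!}` if and only if
`∑_{k=1}^n u(y_k) ≥ s_n(y)` for every `n ∈ {N',…,N}` and every `y ∈ I^n`. -/
theorem dual_sets_eq
    {I : Type*} [TopologicalSpace I] [PolishSpace I] [MeasurableSpace I] [BorelSpace I]
    (μ : Measure I) [IsFiniteMeasure μ]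
    (N' N : ℕ) (hN' : 2 ≤ N') (hNN : N' ≤ N)
    (s : ∀ n : ℕ, (Fin n → I) → ℝ)
    (hs_nonneg : ∀ n ∈ Finset.Icc N' N, ∀ x : Fin n → I, 0 ≤ s n x)
    (hs_usc : ∀ n ∈ Finset.Icc N' N, UpperSemicontinuous (s n))
    (hs_symm : ∀ n ∈ Finset.Icc N' N, ∀ σ : Equiv.Perm (Fin n), ∀ x : Fin n → I,
      s n (x ∘ σ) = s n x)
    (u : I → ℝ) (hu : Integrable u μ) :
    (∀ x : Fin (Nat.factorial N) → I,
        (Nat.factorial (N - 1) : ℝ) * bigS s N' N hNN x ≤ ∑ k, u (x k))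
      ↔ (∀ n ∈ Finset.Icc N' N, ∀ y : Fin n → I, s n y ≤ ∑ k, u (y k)) :=
  dual_sets_eq_general N' N hN' hNN s hs_nonneg hs_symm u
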